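/- Let L be a real Lie algebra, J : L → L linear with J² = -id, D ⊆ L a J-stable Lie subalgebra (J(D) ⊆ D, [D,D] ⊆ D) such that (L_Z J)(X) = [Z,JX] - J[Z,X] ∈ D for all Z ∈ D, X ∈ L, and such that Im N^J ⊆ D. Then T⁺ + Dℂ ⊆ Lℂ is closed under the bracket, where T⁺ = {X - iJX : X ∈ L}. -/

import Mathlib

/-
Write `t X = X - iJX`. Expanding the brackets of generators of `T⁺ + Dℂ` gives
`⁅t X, t Y⁆ = t (⁅X, Y⁆ - ⁅JX, JY⁆) + i N^J(X, JY)` and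
`⁅t X, Z⁆ = t ⁅X, Z⁆ + i (L_Z J)(X)` for `Z ∈ D`, while `⁅D, D⁆ ⊆ D`.
So brackets of generators land in `T⁺ + Dℂ`, and bilinearity does the rest.
-/

open TensorProduct

/-- Inclusion of a real vector space into its complexification. -/
noncomputable def incl {L : Type*} [AddCommGroup L] [Module ℝ L] (x : L) : ℂ ⊗[ℝ] L :=
  (1 : ℂ) ⊗ₜ[ℝ] x

/-- `A⁺(X) = ½(X - iJX)` in the complexification. -/
noncomputable def Ap {L : Type*} [AddCommGroup L] [Module ℝ L] (J : L →ₗ[ℝ] L) (x : L) :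
    ℂ ⊗[ℝ] L :=
  (1 / 2 : ℂ) • (incl x - Complex.I • incl (J x))

/-- `A⁻(X) = ½(X + iJX)` in the complexification. -/
noncomputable def Am {L : Type*} [AddCommGroup L] [Module ℝ L] (J : L →ₗ[ℝ] L) (x : L) :
    ℂ ⊗[ℝ] L :=
  (1 / 2 : ℂ) • (incl x + Complex.I • incl (J x))

theorem Submodule.lie_mem_of_mem_span {R A : Type*} [CommRing R] [LieRing A] [LieAlgebra R A]
    {s : Set A} {p : Submodule R A} (h : ∀ x ∈ s, ∀ y ∈ s, ⁅x, y⁆ ∈ p) {x y : A}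
    (hx : x ∈ Submodule.span R s) (hy : y ∈ Submodule.span R s) : ⁅x, y⁆ ∈ p := by
  induction hx, hy using Submodule.span_induction₂ with
  | mem_mem x y hx hy => exact h x hx y hy
  | zero_left y hy => simp
  | zero_right x hx => simp
  | add_left x y z _ _ _ hx hy => simpa using add_mem hx hy
  | add_right x y z _ _ _ hx hy => simpa using add_mem hx hy
  | smul_left r x y _ _ h => simpa using p.smul_mem r h
  | smul_right r x y _ _ h => simpa using p.smul_mem r h

/- The generic `smul_lie` and `lie_smul` do not rewrite in `A ⊗[R] L`: its two `A`-module
structures (as a tensor product and as an `A`-Lie algebra) agree only up to unfolding instances. -/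
theorem LieAlgebra.ExtendScalars.smul_lie {R A L : Type*} [CommRing R] [CommRing A] [Algebra R A]
    [LieRing L] [LieAlgebra R L] (c : A) (x y : A ⊗[R] L) : ⁅c • x, y⁆ = c • ⁅x, y⁆ :=
  _root_.smul_lie c x y

theorem LieAlgebra.ExtendScalars.lie_smul {R A L : Type*} [CommRing R] [CommRing A] [Algebra R A]
    [LieRing L] [LieAlgebra R L] (c : A) (x y : A ⊗[R] L) : ⁅x, c • y⁆ = c • ⁅x, y⁆ :=
  _root_.lie_smul c x y

section Complexification

variable {L : Type*}

theorem incl_add [AddCommGroup L] [Module ℝ L] (x y : L) :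
    incl (x + y) = incl x + incl y :=
  tmul_add _ _ _

theorem incl_sub [AddCommGroup L] [Module ℝ L] (x y : L) :
    incl (x - y) = incl x - incl y :=
  tmul_sub _ _ _

variable [LieRing L] [LieAlgebra ℝ L]

theorem lie_incl (x y : L) : ⁅incl x, incl y⁆ = incl ⁅x, y⁆ := by
  rw [incl, incl, LieAlgebra.ExtendScalars.bracket_tmul, mul_one]
  rfl

/-- The generators of `T⁺`. -/
noncomputable def tPlus (J : L →ₗ[ℝ] L) (X : L) : ℂ ⊗[ℝ] L :=
  incl X - Complex.I • incl (J X)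

def nijenhuis (J : L →ₗ[ℝ] L) (X Y : L) : L :=
  ⁅J X, J Y⁆ - J ⁅J X, Y⁆ - J ⁅X, J Y⁆ - ⁅X, Y⁆

theorem lie_tPlus_tPlus {J : L →ₗ[ℝ] L} (hJ : ∀ X, J (J X) = -X) (X Y : L) :
    ⁅tPlus J X, tPlus J Y⁆ =
      tPlus J (⁅X, Y⁆ - ⁅J X, J Y⁆) + Complex.I • incl (nijenhuis J X (J Y)) := by
  have hN : nijenhuis J X (J Y) + ⁅X, J Y⁆ + ⁅J X, Y⁆ = J (⁅X, Y⁆ - ⁅J X, J Y⁆) := by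
    simp only [nijenhuis, hJ, lie_neg, map_neg, map_sub]
    abel
  have hN' : Complex.I • incl (nijenhuis J X (J Y)) + Complex.I • incl ⁅X, J Y⁆ +
      Complex.I • incl ⁅J X, Y⁆ = Complex.I • incl (J (⁅X, Y⁆ - ⁅J X, J Y⁆)) := by
    rw [← smul_add, ← smul_add, ← incl_add, ← incl_add, hN]
  simp only [tPlus, lie_sub, sub_lie, LieAlgebra.ExtendScalars.lie_smul,
    LieAlgebra.ExtendScalars.smul_lie, lie_incl, smul_smul,
    Complex.I_mul_I, neg_one_smul, incl_sub]
  linear_combination (norm := module) -hN'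

theorem lie_tPlus_incl (J : L →ₗ[ℝ] L) (X Z : L) :
    ⁅tPlus J X, incl Z⁆ = tPlus J ⁅X, Z⁆ + Complex.I • incl (⁅Z, J X⁆ - J ⁅Z, X⁆) := by
  rw [← lie_skew Z X, ← lie_skew Z (J X), map_neg]
  simp only [tPlus, sub_lie, LieAlgebra.ExtendScalars.smul_lie, lie_incl, neg_sub_neg,
    incl_sub]
  module

end Complexification

theorem transverse_complex_involutive_general (L : Type*) [LieRing L] [LieAlgebra ℝ L]
    (J : L →ₗ[ℝ] L) (hJ : ∀ X, J (J X) = -X)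
    (N : L → L → L)
    (hN : ∀ X Y, N X Y = ⁅J X, J Y⁆ - J ⁅J X, Y⁆ - J ⁅X, J Y⁆ - ⁅X, Y⁆)
    (D : Submodule ℝ L)
    (hDD : ∀ x ∈ D, ∀ y ∈ D, ⁅x, y⁆ ∈ D)
    (hDLJ : ∀ Z ∈ D, ∀ X : L, ⁅Z, J X⁆ - J ⁅Z, X⁆ ∈ D)
    (hDN : ∀ X Y : L, N X Y ∈ D)
    (S : Submodule ℂ (ℂ ⊗[ℝ] L))
    (hS : S = Submodule.span ℂ {z : ℂ ⊗[ℝ] L | ∃ X : L, z = incl X - Complex.I • incl (J X)} ⊔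
        Submodule.span ℂ (incl '' (D : Set L))) :
    ∀ a ∈ S, ∀ b ∈ S, ⁅a, b⁆ ∈ S := by
  rw [← Submodule.span_union] at hS
  have htS (X : L) : tPlus J X ∈ S := hS ▸ Submodule.subset_span (Or.inl ⟨X, rfl⟩)
  have hDS {Z : L} (hZ : Z ∈ D) : incl Z ∈ S := hS ▸ Submodule.subset_span (Or.inr ⟨Z, hZ, rfl⟩)
  obtain rfl : N = nijenhuis J := funext₂ hN
  have hNS (X Y : L) : Complex.I • incl (nijenhuis J X Y) ∈ S := S.smul_mem _ (hDS (hDN X Y))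
  have hLS {Z : L} (hZ : Z ∈ D) (X : L) : ⁅tPlus J X, incl Z⁆ ∈ S := by
    rw [lie_tPlus_incl]
    exact add_mem (htS _) (S.smul_mem _ (hDS (hDLJ Z hZ X)))
  intro a ha b hb
  rw [hS] at ha hb
  refine Submodule.lie_mem_of_mem_span ?_ ha hb
  rintro _ (⟨X, rfl⟩ | ⟨Z, hZ, rfl⟩) _ (⟨Y, rfl⟩ | ⟨W, hW, rfl⟩)
  · change ⁅tPlus J X, tPlus J Y⁆ ∈ S
    rw [lie_tPlus_tPlus hJ]
    exact add_mem (htS _) (hNS X (J Y))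
  · exact hLS hW X
  · rw [← lie_skew]
    exact neg_mem (hLS hZ Y)
  · exact lie_incl Z W ▸ hDS (hDD Z hZ W hW)

/-- If `D ⊆ L` is a `J`-stable subalgebra, stable under all operators `L_Z J` for `Z ∈ D`,
and containing the image of the Nijenhuis torsion `N^J`, then `T⁺ + Dℂ` is closed under
the bracket in the complexification. -/
theorem transverse_complex_involutive (L : Type*) [LieRing L] [LieAlgebra ℝ L]
    (J : L →ₗ[ℝ] L) (hJ : ∀ X, J (J X) = -X)
    (N : L → L → L)
    (hN : ∀ X Y, N X Y = ⁅J X, J Y⁆ - J ⁅J X, Y⁆ - J ⁅X, J Y⁆ - ⁅X, Y⁆)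
    (D : Submodule ℝ L)
    (hDJ : ∀ x ∈ D, J x ∈ D)
    (hDD : ∀ x ∈ D, ∀ y ∈ D, ⁅x, y⁆ ∈ D)
    (hDLJ : ∀ Z ∈ D, ∀ X : L, ⁅Z, J X⁆ - J ⁅Z, X⁆ ∈ D)
    (hDN : ∀ X Y : L, N X Y ∈ D)
    (S : Submodule ℂ (ℂ ⊗[ℝ] L))
    (hS : S = Submodule.span ℂ {z : ℂ ⊗[ℝ] L | ∃ X : L, z = incl X - Complex.I • incl (J X)} ⊔
        Submodule.span ℂ (incl '' (D : Set L))) :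
    ∀ a ∈ S, ∀ b ∈ S, ⁅a, b⁆ ∈ S :=
  transverse_complex_involutive_general L J hJ N hN D hDD hDLJ hDN S hS
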